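/- arXiv:1802.06027 — 2 statements merged into one kernel-verified Lean document; each statement's English description precedes it below -/
import Mathlib

section
/- In a rooted tree, a node n is the k-depth ancestor of a leaf m (n = α_m^k) if and only if there exists a subset W of the leaves with m ∈ W such that the intersection over all w ∈ W of the k-th level sets N_w^k equals the singleton {n}. -/
open scoped Classical

/-- A finite rooted tree encoded by a parent function: every node reaches the
root by iterating `parent`, and the root is its own parent. -/
structure GridTree (V : Type) [Fintype V] [DecidableEq V] where
  root : V
  parent : V → V
  parent_root : parent root = root
  reaches : ∀ v, ∃ k, parent^[k] v = root

namespace GridTree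

variable {V : Type} [Fintype V] [DecidableEq V]

/-- Depth of a node: distance (number of edges) to the root. -/
noncomputable def depth (T : GridTree V) (v : V) : ℕ := Nat.find (T.reaches v)

/-- The depth-`k` ancestor `α_v^k` of `v` (for `k ≤ depth v`). -/
noncomputable def anc (T : GridTree V) (v : V) (k : ℕ) : V :=
  T.parent^[T.depth v - k] v

/-- Ancestor set `A_v`: all nodes on the path from the root to `v`, including `v`. -/
def ancSet (T : GridTree V) (v : V) : Set V := {u | ∃ j, T.parent^[j] v = u}

/-- Descendant set `D_n`: all nodes whose ancestor set contains `n`. -/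
def desc (T : GridTree V) (n : V) : Set V := {m | n ∈ T.ancSet m}

/-- The `k`-th level set `N_m^k` of node `m`. -/
noncomputable def level (T : GridTree V) (m : V) (k : ℕ) : Set V :=
  if k = T.depth m then T.desc m
  else T.desc (T.anc m k) \ T.desc (T.anc m (k + 1))

/-- A leaf: a node with no descendants other than itself. -/
def IsLeaf (T : GridTree V) (m : V) : Prop := T.desc m = {m}

/-- Path-resistance matrix: `R m n` is the sum of the resistances of edges with
both endpoints in `A_m ∩ A_n`.  The edge above a non-root node `c` (joining `c`
to its parent) has resistance `r c`. -/
noncomputable def Rmat (T : GridTree V) (r : V → ℝ) (m n : V) : ℝ :=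
  ∑ c : V, if c ∈ T.ancSet m ∧ c ∈ T.ancSet n ∧ c ≠ T.root then r c else 0

end GridTree


/-!
Every node of a level set `N_w^k` has `α_w^k` as its depth-`k` ancestor, and `N_w^k` contains
`α_w^k`; so if `n` lies in all `N_w^k` with `w ∈ W ∋ m`, then so does `α_n^k = α_m^k`, and the
intersection being `{n}` forces `n = α_m^k`. Conversely, for `n = α_m^k` take all leaves below `n`:
a node `x ≠ n` lying in all their level sets would be a proper descendant of `n`, and a leaf `w`
below `x` has `x ∈ D_{α_w^{k+1}}`, so `x ∉ N_w^k`.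
-/

namespace GridTree

variable {V : Type} [Fintype V] [DecidableEq V] (T : GridTree V)

lemma iterate_depth (v : V) : T.parent^[T.depth v] v = T.root :=
  Nat.find_spec (T.reaches v)

lemma depth_le_of_iterate_eq_root {v : V} {j : ℕ} (h : T.parent^[j] v = T.root) :
    T.depth v ≤ j :=
  Nat.find_le h

lemma iterate_eq_root_of_depth_le {v : V} {j : ℕ} (h : T.depth v ≤ j) :
    T.parent^[j] v = T.root := by
  obtain ⟨i, rfl⟩ := Nat.exists_eq_add_of_le h
  rw [add_comm, Function.iterate_add_apply, T.iterate_depth,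
    Function.iterate_fixed T.parent_root]

lemma depth_iterate (j : ℕ) (v : V) : T.depth (T.parent^[j] v) = T.depth v - j := by
  have hle : T.depth (T.parent^[j] v) ≤ T.depth v - j := by
    apply T.depth_le_of_iterate_eq_root
    rw [← Function.iterate_add_apply]
    exact T.iterate_eq_root_of_depth_le (by omega)
  have hge : T.depth v ≤ T.depth (T.parent^[j] v) + j := by
    apply T.depth_le_of_iterate_eq_root
    rw [Function.iterate_add_apply, T.iterate_depth]
  omega

lemma anc_of_depth_le {v : V} {k : ℕ} (h : T.depth v ≤ k) : T.anc v k = v := by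
  rw [anc, Nat.sub_eq_zero_of_le h, Function.iterate_zero_apply]

lemma depth_anc {v : V} {k : ℕ} (h : k ≤ T.depth v) : T.depth (T.anc v k) = k := by
  rw [anc, T.depth_iterate]
  omega

lemma mem_desc_self (v : V) : v ∈ T.desc v := ⟨0, rfl⟩

lemma mem_desc_anc (v : V) (k : ℕ) : v ∈ T.desc (T.anc v k) := ⟨_, rfl⟩

lemma mem_desc_trans {x y z : V} (hxy : x ∈ T.desc y) (hyz : y ∈ T.desc z) :
    x ∈ T.desc z := by
  obtain ⟨i, rfl⟩ := hxy
  obtain ⟨j, rfl⟩ := hyz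
  exact ⟨j + i, Function.iterate_add_apply _ _ _ _⟩

lemma depth_le_of_mem_desc {x n : V} (h : x ∈ T.desc n) : T.depth n ≤ T.depth x := by
  obtain ⟨j, rfl⟩ := h
  rw [T.depth_iterate]
  omega

lemma anc_eq_of_mem_desc {x n : V} (h : x ∈ T.desc n) : T.anc x (T.depth n) = n := by
  obtain ⟨j, rfl⟩ := h
  rw [anc, T.depth_iterate]
  rcases le_or_gt j (T.depth x) with hj | hj
  · rw [Nat.sub_sub_self hj]
  · rw [T.iterate_eq_root_of_depth_le hj.le, T.iterate_eq_root_of_depth_le (by omega)]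

lemma anc_eq_anc_of_mem_desc {w x : V} {k : ℕ} (h : w ∈ T.desc x) (hk : k ≤ T.depth x) :
    T.anc w k = T.anc x k := by
  have := T.anc_eq_of_mem_desc (T.mem_desc_trans h (T.mem_desc_anc x k))
  rwa [T.depth_anc hk] at this

lemma exists_isLeaf_mem_desc (x : V) : ∃ w, T.IsLeaf w ∧ w ∈ T.desc x := by
  obtain ⟨w, hw, hmax⟩ := (T.desc x).toFinite.exists_maximalFor T.depth _ ⟨x, T.mem_desc_self x⟩
  refine ⟨w, Set.eq_singleton_iff_unique_mem.mpr ⟨T.mem_desc_self w, fun u hu => ?_⟩, hw⟩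
  have hdepth := hmax (T.mem_desc_trans hu hw) (T.depth_le_of_mem_desc hu)
  simpa [anc, Nat.sub_eq_zero_of_le hdepth] using T.anc_eq_of_mem_desc hu

lemma level_eq_empty_of_depth_lt {w : V} {k : ℕ} (h : T.depth w < k) : T.level w k = ∅ := by
  rw [level, if_neg h.ne', T.anc_of_depth_le h.le, T.anc_of_depth_le (by omega), Set.sdiff_self]

lemma le_depth_of_mem_level {x w : V} {k : ℕ} (h : x ∈ T.level w k) : k ≤ T.depth w := by
  by_contra! hk
  rw [T.level_eq_empty_of_depth_lt hk] at h
  exact h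

lemma level_subset_desc_anc (w : V) (k : ℕ) : T.level w k ⊆ T.desc (T.anc w k) := by
  unfold level
  split_ifs with hk
  · rw [hk, T.anc_of_depth_le le_rfl]
  · exact Set.sdiff_subset

lemma anc_eq_of_mem_level {x w : V} {k : ℕ} (h : x ∈ T.level w k) : T.anc x k = T.anc w k := by
  have := T.anc_eq_of_mem_desc (T.level_subset_desc_anc w k h)
  rwa [T.depth_anc (T.le_depth_of_mem_level h)] at this

lemma anc_mem_level {w : V} {k : ℕ} (hk : k ≤ T.depth w) : T.anc w k ∈ T.level w k := by
  unfold level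
  split_ifs with hkw
  · rw [hkw, T.anc_of_depth_le le_rfl]
    exact T.mem_desc_self w
  · refine ⟨T.mem_desc_self _, fun h => ?_⟩
    have := T.depth_le_of_mem_desc h
    rw [T.depth_anc hk, T.depth_anc (by omega)] at this
    omega

lemma anc_mem_level_of_mem_level {x w : V} {k : ℕ} (h : x ∈ T.level w k) :
    T.anc x k ∈ T.level w k :=
  T.anc_eq_of_mem_level h ▸ T.anc_mem_level (T.le_depth_of_mem_level h)

lemma notMem_level_of_mem_desc {w x : V} {k : ℕ} (hw : w ∈ T.desc x) (hk : k < T.depth x) :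
    x ∉ T.level w k := by
  have hkw : k ≠ T.depth w := by
    have := T.depth_le_of_mem_desc hw
    omega
  rw [level, if_neg hkw, T.anc_eq_anc_of_mem_desc (k := k + 1) hw hk]
  exact fun h => h.2 (T.mem_desc_anc x (k + 1))

lemma biInter_level_leaves_of_desc (n : V) :
    ⋂ w ∈ {w | T.IsLeaf w ∧ w ∈ T.desc n}, T.level w (T.depth n) = {n} := by
  refine Set.eq_singleton_iff_unique_mem.mpr ⟨?_, fun x hx => ?_⟩
  · refine Set.mem_iInter₂.mpr fun w hw => ?_
    have := T.anc_mem_level (T.depth_le_of_mem_desc hw.2)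
    rwa [T.anc_eq_of_mem_desc hw.2] at this
  · obtain ⟨w₀, hw₀⟩ := T.exists_isLeaf_mem_desc n
    have hxn : x ∈ T.desc n := by
      have := T.level_subset_desc_anc w₀ _ (Set.mem_iInter₂.mp hx w₀ hw₀)
      rwa [T.anc_eq_of_mem_desc hw₀.2] at this
    rcases (T.depth_le_of_mem_desc hxn).eq_or_lt with hd | hd
    · simpa [← hd, T.anc_of_depth_le] using T.anc_eq_of_mem_desc hxn
    · obtain ⟨w, hwl, hwx⟩ := T.exists_isLeaf_mem_desc x
      exact absurd (Set.mem_iInter₂.mp hx w ⟨hwl, T.mem_desc_trans hwx hxn⟩)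
        (T.notMem_level_of_mem_desc hwx hd)

end GridTree

/-- Lemma 3: `n = α_m^k` for a leaf `m` iff there is a set of leaves `W ∋ m`
whose `k`-th level sets intersect exactly in `{n}`. -/
theorem stmt6 {V : Type} [Fintype V] [DecidableEq V] (T : GridTree V)
    (m : V) (hm : T.IsLeaf m) (k : ℕ) (hk : k ≤ T.depth m) (n : V) :
    T.anc m k = n ↔
      ∃ W : Set V, m ∈ W ∧ (∀ w ∈ W, T.IsLeaf w) ∧
        (⋂ w ∈ W, T.level w k) = {n} := by
  constructor
  · rintro rfl
    refine ⟨{w | T.IsLeaf w ∧ w ∈ T.desc (T.anc m k)}, ⟨hm, T.mem_desc_anc m k⟩,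
      fun w hw => hw.1, ?_⟩
    simpa only [T.depth_anc hk] using T.biInter_level_leaves_of_desc (T.anc m k)
  · rintro ⟨W, hmW, -, hW⟩
    have hn : ∀ w ∈ W, n ∈ T.level w k := Set.mem_iInter₂.mp (hW ▸ Set.mem_singleton n)
    have hanc : T.anc n k ∈ ⋂ w ∈ W, T.level w k :=
      Set.mem_iInter₂.mpr fun w hw => T.anc_mem_level_of_mem_level (hn w hw)
    rw [hW, Set.mem_singleton_iff] at hanc
    rw [← T.anc_eq_of_mem_level (hn m hmW), hanc]
end

section
/- Let G and G' be two rooted trees on the same vertex set with path-resistance matrices R and R' (inverses of their reduced weighted Laplacians), and suppose R e_m = R' e_m for some node m. Then m has the same depth in both trees, and all level sets of m coincide: N_m^k(G) = N_m^k(G') for all 0 ≤ k ≤ d_m. -/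
open scoped Classical

namespace GridTree

variable {V : Type} [Fintype V] [DecidableEq V]

lemma iterate_root (T : GridTree V) (k : ℕ) : T.parent^[k] T.root = T.root := by
  induction k with
  | zero => rfl
  | succ n ih => rw [Function.iterate_succ_apply', ih, T.parent_root]

lemma depth_spec (T : GridTree V) (v : V) : T.parent^[T.depth v] v = T.root :=
  Nat.find_spec (T.reaches v)

lemma depth_min (T : GridTree V) {v : V} {k : ℕ} (h : k < T.depth v) :
    T.parent^[k] v ≠ T.root := Nat.find_min (T.reaches v) h

lemma root_mem_ancSet (T : GridTree V) (v : V) : T.root ∈ T.ancSet v :=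
  ⟨T.depth v, T.depth_spec v⟩

lemma self_mem_ancSet (T : GridTree V) (v : V) : v ∈ T.ancSet v := ⟨0, rfl⟩

lemma ancSet_subset (T : GridTree V) {u v : V} (h : u ∈ T.ancSet v) :
    T.ancSet u ⊆ T.ancSet v := by
  obtain ⟨j, hj⟩ := h
  rintro w ⟨i, hi⟩
  exact ⟨i + j, by rw [Function.iterate_add_apply, hj, hi]⟩

lemma mem_ancSet_root (T : GridTree V) {u : V} (h : u ∈ T.ancSet T.root) :
    u = T.root := by
  obtain ⟨j, hj⟩ := h
  rw [T.iterate_root] at hj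
  exact hj.symm

lemma ancSet_antisymm (T : GridTree V) {u w : V} (h1 : u ∈ T.ancSet w)
    (h2 : w ∈ T.ancSet u) : u = w := by
  obtain ⟨a, ha⟩ := h1
  obtain ⟨b, hb⟩ := h2
  rcases Nat.eq_zero_or_pos (b + a) with h0 | hpos
  · have ha0 : a = 0 := by omega
    rw [ha0] at ha; exact ha.symm
  · have hper : ∀ t, T.parent^[t * (b + a)] w = w := by
      intro t
      induction t with
      | zero => simp
      | succ n ih =>
        have hh : (n + 1) * (b + a) = (b + a) + n * (b + a) := by ring
        rw [hh, Function.iterate_add_apply, ih, Function.iterate_add_apply, ha, hb]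
    have hw : w = T.root := by
      have h2 := hper (T.depth w + 1)
      have hN : T.depth w ≤ (T.depth w + 1) * (b + a) := by nlinarith
      rw [show (T.depth w + 1) * (b + a) = ((T.depth w + 1) * (b + a) - T.depth w) + T.depth w by omega,
        Function.iterate_add_apply, T.depth_spec, T.iterate_root] at h2
      exact h2.symm
    subst hw
    rw [T.iterate_root] at ha
    exact ha.symm

lemma ancSet_comparable (T : GridTree V) {u w m : V} (hu : u ∈ T.ancSet m)
    (hw : w ∈ T.ancSet m) : u ∈ T.ancSet w ∨ w ∈ T.ancSet u := by
  obtain ⟨a, ha⟩ := hu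
  obtain ⟨b, hb⟩ := hw
  rcases le_total a b with h | h
  · right
    exact ⟨b - a, by rw [← ha, ← Function.iterate_add_apply, Nat.sub_add_cancel h, hb]⟩
  · left
    exact ⟨a - b, by rw [← hb, ← Function.iterate_add_apply, Nat.sub_add_cancel h, ha]⟩

lemma iterate_inj (T : GridTree V) {v : V} {a b : ℕ} (ha : a ≤ T.depth v)
    (hb : b ≤ T.depth v) (h : T.parent^[a] v = T.parent^[b] v) : a = b := by
  by_contra hne
  wlog hab : a < b generalizing a b
  · exact this hb ha h.symm (Ne.symm hne) (by omega)
  have hroot : T.parent^[T.depth v - (b - a)] v = T.root := by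
    rw [show T.depth v - (b - a) = (T.depth v - b) + a by omega,
      Function.iterate_add_apply, h, ← Function.iterate_add_apply,
      show T.depth v - b + b = T.depth v by omega, T.depth_spec]
  exact T.depth_min (by omega) hroot

lemma anc_mem (T : GridTree V) (m : V) (k : ℕ) : T.anc m k ∈ T.ancSet m :=
  ⟨T.depth m - k, rfl⟩

lemma anc_depth (T : GridTree V) (m : V) : T.anc m (T.depth m) = m := by
  simp [anc]

lemma anc_zero (T : GridTree V) (m : V) : T.anc m 0 = T.root := by
  simp [anc, T.depth_spec]

lemma anc_mem_anc (T : GridTree V) (m : V) {k k' : ℕ} (h : k ≤ k') (h' : k' ≤ T.depth m) :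
    T.anc m k ∈ T.ancSet (T.anc m k') :=
  ⟨k' - k, by rw [anc, anc, ← Function.iterate_add_apply]; congr 1; omega⟩

lemma anc_injOn (T : GridTree V) (m : V) {k k' : ℕ} (hk : k ≤ T.depth m)
    (hk' : k' ≤ T.depth m) (h : T.anc m k = T.anc m k') : k = k' := by
  have := T.iterate_inj (v := m) (a := T.depth m - k) (b := T.depth m - k')
    (by omega) (by omega) h
  omega

lemma mem_ancSet_iff (T : GridTree V) {m c : V} (h : c ∈ T.ancSet m) :
    ∃ k, k ≤ T.depth m ∧ T.anc m k = c := by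
  obtain ⟨j, hj⟩ := h
  by_cases hjd : j ≤ T.depth m
  · exact ⟨T.depth m - j, by omega,
      by rw [anc, show T.depth m - (T.depth m - j) = j by omega, hj]⟩
  · refine ⟨0, Nat.zero_le _, ?_⟩
    rw [T.anc_zero, ← hj,
      show j = (j - T.depth m) + T.depth m by omega,
      Function.iterate_add_apply, T.depth_spec, T.iterate_root]

lemma dca_ex (T : GridTree V) (m n : V) : ∃ j, T.parent^[j] n ∈ T.ancSet m :=
  ⟨T.depth n, by rw [T.depth_spec]; exact T.root_mem_ancSet m⟩

noncomputable def dca (T : GridTree V) (m n : V) : V :=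
  T.parent^[Nat.find (T.dca_ex m n)] n

lemma dca_mem_left (T : GridTree V) (m n : V) : T.dca m n ∈ T.ancSet n :=
  ⟨_, rfl⟩

lemma dca_mem_right (T : GridTree V) (m n : V) : T.dca m n ∈ T.ancSet m :=
  Nat.find_spec (T.dca_ex m n)

lemma mem_dca_iff (T : GridTree V) (m n u : V) :
    u ∈ T.ancSet (T.dca m n) ↔ u ∈ T.ancSet n ∧ u ∈ T.ancSet m := by
  constructor
  · intro h
    exact ⟨T.ancSet_subset (T.dca_mem_left m n) h, T.ancSet_subset (T.dca_mem_right m n) h⟩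
  · rintro ⟨⟨a, ha⟩, hm⟩
    have hge : Nat.find (T.dca_ex m n) ≤ a := by
      by_contra hlt
      exact Nat.find_min (T.dca_ex m n) (by omega)
        (show T.parent^[a] n ∈ T.ancSet m by rw [ha]; exact hm)
    exact ⟨a - Nat.find (T.dca_ex m n), by
      rw [dca, ← Function.iterate_add_apply, Nat.sub_add_cancel hge, ha]⟩

noncomputable def Hsum (T : GridTree V) (r : V → ℝ) (c : V) : ℝ :=
  ∑ x : V, if x ∈ T.ancSet c ∧ x ≠ T.root then r x else 0

lemma Rmat_eq_Hsum_dca (T : GridTree V) (r : V → ℝ) (m n : V) :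
    T.Rmat r n m = T.Hsum r (T.dca m n) := by
  unfold Rmat Hsum
  refine Finset.sum_congr rfl fun x _ => if_congr ?_ rfl rfl
  rw [T.mem_dca_iff m n x]
  tauto

lemma Rmat_mem (T : GridTree V) (r : V → ℝ) {m c : V} (h : c ∈ T.ancSet m) :
    T.Rmat r c m = T.Hsum r c := by
  unfold Rmat Hsum
  refine Finset.sum_congr rfl fun x _ => if_congr ?_ rfl rfl
  constructor
  · tauto
  · rintro ⟨h1, h2⟩
    exact ⟨h1, T.ancSet_subset h h1, h2⟩

lemma Hsum_mono (T : GridTree V) {r : V → ℝ} (hr : ∀ c, c ≠ T.root → 0 < r c)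
    {u w : V} (h : u ∈ T.ancSet w) : T.Hsum r u ≤ T.Hsum r w := by
  refine Finset.sum_le_sum fun x _ => ?_
  by_cases hx : x ∈ T.ancSet u ∧ x ≠ T.root
  · rw [if_pos hx, if_pos ⟨T.ancSet_subset h hx.1, hx.2⟩]
  · rw [if_neg hx]
    by_cases hx' : x ∈ T.ancSet w ∧ x ≠ T.root
    · rw [if_pos hx']; exact le_of_lt (hr x hx'.2)
    · rw [if_neg hx']

lemma Hsum_strict (T : GridTree V) {r : V → ℝ} (hr : ∀ c, c ≠ T.root → 0 < r c)
    {u w : V} (h : u ∈ T.ancSet w) (hne : u ≠ w) : T.Hsum r u < T.Hsum r w := by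
  have hwu : w ∉ T.ancSet u := fun hw => hne (T.ancSet_antisymm h hw)
  have hwroot : w ≠ T.root := fun hroot =>
    hne ((T.mem_ancSet_root (hroot ▸ h)).trans hroot.symm)
  refine Finset.sum_lt_sum (fun x _ => ?_) ⟨w, Finset.mem_univ w, ?_⟩
  · by_cases hx : x ∈ T.ancSet u ∧ x ≠ T.root
    · rw [if_pos hx, if_pos ⟨T.ancSet_subset h hx.1, hx.2⟩]
    · rw [if_neg hx]
      by_cases hx' : x ∈ T.ancSet w ∧ x ≠ T.root
      · rw [if_pos hx']; exact le_of_lt (hr x hx'.2)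
      · rw [if_neg hx']
  · rw [if_neg (fun hx => hwu hx.1), if_pos ⟨T.self_mem_ancSet w, hwroot⟩]
    exact hr w hwroot

lemma desc_iff (T : GridTree V) {r : V → ℝ} (hr : ∀ c, c ≠ T.root → 0 < r c)
    {m α : V} (hα : α ∈ T.ancSet m) (n : V) :
    n ∈ T.desc α ↔ T.Hsum r α ≤ T.Rmat r n m := by
  rw [T.Rmat_eq_Hsum_dca]
  simp only [desc, Set.mem_setOf_eq]
  constructor
  · intro hn
    exact T.Hsum_mono hr ((T.mem_dca_iff m n α).mpr ⟨hn, hα⟩)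
  · intro hle
    rcases T.ancSet_comparable hα (T.dca_mem_right m n) with h | h
    · exact T.ancSet_subset (T.dca_mem_left m n) h
    · have heq : T.dca m n = α := by
        by_contra hne
        exact absurd hle (not_le.mpr (T.Hsum_strict hr h hne))
      rw [← heq]; exact T.dca_mem_left m n

end GridTree

/-- Proposition 1: if the `m`-th columns of the path-resistance matrices of two
rooted trees coincide, then `m` has the same depth in both trees and all level
sets of `m` coincide. -/
theorem stmt17 {V : Type} [Fintype V] [DecidableEq V] (T T' : GridTree V)
    (hroot : T.root = T'.root)
    (r r' : V → ℝ)
    (hr : ∀ c, c ≠ T.root → 0 < r c) (hr' : ∀ c, c ≠ T'.root → 0 < r' c)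
    (m : V) (hcol : ∀ n, T.Rmat r n m = T'.Rmat r' n m) :
    T.depth m = T'.depth m ∧
      ∀ k ≤ T.depth m, T.level m k = T'.level m k := by
  classical
  set d := T.depth m with hd_def
  set d' := T'.depth m with hd'_def
  set g : V → ℝ := fun n => T.Rmat r n m with hg_def
  set g' : V → ℝ := fun n => T'.Rmat r' n m with hg'_def
  have hgg : g = g' := funext hcol
  set v : ℕ → ℝ := fun k => T.Hsum r (T.anc m k) with hv_def
  set v' : ℕ → ℝ := fun k => T'.Hsum r' (T'.anc m k) with hv'_def
  -- basic facts about v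
  have hvmono : ∀ {k k' : ℕ}, k < k' → k' ≤ d → v k < v k' := by
    intro k k' hk hk'
    exact T.Hsum_strict hr (T.anc_mem_anc m (le_of_lt hk) hk')
      (fun he => absurd (T.anc_injOn m (le_of_lt (lt_of_lt_of_le hk hk')) hk' he) (by omega))
  have hvinj : ∀ {a b : ℕ}, a ≤ d → b ≤ d → v a = v b → a = b := by
    intro a b ha hb hab
    by_contra hne
    rcases Nat.lt_or_ge a b with h | h
    · exact absurd hab (ne_of_lt (hvmono h hb))
    · exact absurd hab.symm (ne_of_lt (hvmono (by omega) ha))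
  have hgv : ∀ k, g (T.anc m k) = v k := fun k => T.Rmat_mem r (T.anc_mem m k)
  have hvS : ∀ n, ∃ k ≤ d, g n = v k := by
    intro n
    obtain ⟨k, hk, hkeq⟩ := T.mem_ancSet_iff (T.dca_mem_right m n)
    exact ⟨k, hk, by rw [hv_def]; simp only [hg_def]; rw [T.Rmat_eq_Hsum_dca, ← hkeq]⟩
  -- same for primed tree
  have hvmono' : ∀ {k k' : ℕ}, k < k' → k' ≤ d' → v' k < v' k' := by
    intro k k' hk hk'
    exact T'.Hsum_strict hr' (T'.anc_mem_anc m (le_of_lt hk) hk')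
      (fun he => absurd (T'.anc_injOn m (le_of_lt (lt_of_lt_of_le hk hk')) hk' he) (by omega))
  have hvinj' : ∀ {a b : ℕ}, a ≤ d' → b ≤ d' → v' a = v' b → a = b := by
    intro a b ha hb hab
    by_contra hne
    rcases Nat.lt_or_ge a b with h | h
    · exact absurd hab (ne_of_lt (hvmono' h hb))
    · exact absurd hab.symm (ne_of_lt (hvmono' (by omega) ha))
  have hgv' : ∀ k, g' (T'.anc m k) = v' k := fun k => T'.Rmat_mem r' (T'.anc_mem m k)
  have hvS' : ∀ n, ∃ k ≤ d', g' n = v' k := by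
    intro n
    obtain ⟨k, hk, hkeq⟩ := T'.mem_ancSet_iff (T'.dca_mem_right m n)
    exact ⟨k, hk, by rw [hv'_def]; simp only [hg'_def]; rw [T'.Rmat_eq_Hsum_dca, ← hkeq]⟩
  -- the common value set
  set S : Finset ℝ := Finset.image g Finset.univ with hS_def
  have hSv : S = Finset.image v (Finset.range (d + 1)) := by
    ext x
    simp only [hS_def, Finset.mem_image, Finset.mem_univ, true_and, Finset.mem_range]
    constructor
    · rintro ⟨n, rfl⟩
      obtain ⟨k, hk, he⟩ := hvS n
      exact ⟨k, by omega, he.symm⟩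
    · rintro ⟨k, hk, rfl⟩
      exact ⟨T.anc m k, hgv k⟩
  have hSv' : S = Finset.image v' (Finset.range (d' + 1)) := by
    ext x
    simp only [hS_def, hgg, Finset.mem_image, Finset.mem_univ, true_and, Finset.mem_range]
    constructor
    · rintro ⟨n, rfl⟩
      obtain ⟨k, hk, he⟩ := hvS' n
      exact ⟨k, by omega, he.symm⟩
    · rintro ⟨k, hk, rfl⟩
      exact ⟨T'.anc m k, hgv' k⟩
  have hScard : S.card = d + 1 := by
    rw [hSv, Finset.card_image_of_injOn, Finset.card_range]
    intro a ha b hb hab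
    simp only [Finset.mem_coe, Finset.mem_range] at ha hb
    exact hvinj (by omega) (by omega) hab
  have hScard' : S.card = d' + 1 := by
    rw [hSv', Finset.card_image_of_injOn, Finset.card_range]
    intro a ha b hb hab
    simp only [Finset.mem_coe, Finset.mem_range] at ha hb
    exact hvinj' (by omega) (by omega) hab
  have hd : d = d' := by omega
  -- counting characterization of v k within S
  have hcnt : ∀ k ≤ d, (S.filter (fun x => x < v k)).card = k := by
    intro k hk
    have hfe : S.filter (fun x => x < v k) = Finset.image v (Finset.range k) := by
      rw [hSv]
      ext x
      simp only [Finset.mem_filter, Finset.mem_image, Finset.mem_range]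
      constructor
      · rintro ⟨⟨j, hj, rfl⟩, hlt⟩
        refine ⟨j, ?_, rfl⟩
        by_contra hjk
        rcases Nat.lt_or_ge k j with h2 | h2
        · exact absurd hlt (not_lt.mpr (le_of_lt (hvmono h2 (by omega))))
        · have : k = j := by omega
          rw [this] at hlt
          exact lt_irrefl _ hlt
      · rintro ⟨j, hj, rfl⟩
        exact ⟨⟨j, by omega, rfl⟩, hvmono hj hk⟩
    rw [hfe, Finset.card_image_of_injOn, Finset.card_range]
    intro a ha b hb hab
    simp only [Finset.mem_coe, Finset.mem_range] at ha hb
    exact hvinj (by omega) (by omega) hab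
  have hcnt' : ∀ k ≤ d', (S.filter (fun x => x < v' k)).card = k := by
    intro k hk
    have hfe : S.filter (fun x => x < v' k) = Finset.image v' (Finset.range k) := by
      rw [hSv']
      ext x
      simp only [Finset.mem_filter, Finset.mem_image, Finset.mem_range]
      constructor
      · rintro ⟨⟨j, hj, rfl⟩, hlt⟩
        refine ⟨j, ?_, rfl⟩
        by_contra hjk
        rcases Nat.lt_or_ge k j with h2 | h2
        · exact absurd hlt (not_lt.mpr (le_of_lt (hvmono' h2 (by omega))))
        · have : k = j := by omega
          rw [this] at hlt
          exact lt_irrefl _ hlt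
      · rintro ⟨j, hj, rfl⟩
        exact ⟨⟨j, by omega, rfl⟩, hvmono' hj hk⟩
    rw [hfe, Finset.card_image_of_injOn, Finset.card_range]
    intro a ha b hb hab
    simp only [Finset.mem_coe, Finset.mem_range] at ha hb
    exact hvinj' (by omega) (by omega) hab
  -- cross-tree equality of level values
  have hvmemS : ∀ k ≤ d, v k ∈ S := by
    intro k hk
    rw [hSv]
    exact Finset.mem_image.mpr ⟨k, Finset.mem_range.mpr (by omega), rfl⟩
  have hvmemS' : ∀ k ≤ d', v' k ∈ S := by
    intro k hk
    rw [hSv']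
    exact Finset.mem_image.mpr ⟨k, Finset.mem_range.mpr (by omega), rfl⟩
  have hveq : ∀ k ≤ d, v k = v' k := by
    intro k hk
    by_contra hne
    have h1 := hcnt k hk
    have h2 := hcnt' k (by omega)
    rcases lt_or_gt_of_ne hne with hlt | hlt
    · have hsub : S.filter (fun x => x < v k) ⊆ S.filter (fun x => x < v' k) := by
        intro x hx
        simp only [Finset.mem_filter] at hx ⊢
        exact ⟨hx.1, lt_trans hx.2 hlt⟩
      have hss : S.filter (fun x => x < v k) ⊂ S.filter (fun x => x < v' k) :=
        (Finset.ssubset_iff_of_subset hsub).mpr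
          ⟨v k, Finset.mem_filter.mpr ⟨hvmemS k hk, hlt⟩, by simp⟩
      have := Finset.card_lt_card hss
      omega
    · have hsub : S.filter (fun x => x < v' k) ⊆ S.filter (fun x => x < v k) := by
        intro x hx
        simp only [Finset.mem_filter] at hx ⊢
        exact ⟨hx.1, lt_trans hx.2 hlt⟩
      have hss : S.filter (fun x => x < v' k) ⊂ S.filter (fun x => x < v k) :=
        (Finset.ssubset_iff_of_subset hsub).mpr
          ⟨v' k, Finset.mem_filter.mpr ⟨hvmemS' k (by omega), hlt⟩, by simp⟩
      have := Finset.card_lt_card hss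
      omega
  -- conclude
  refine ⟨hd, fun k hk => ?_⟩
  unfold GridTree.level
  rw [← hd_def, ← hd'_def, ← hd]
  by_cases hkd : k = d
  · rw [if_pos hkd, if_pos hkd]
    ext n
    have hanc1 : T.anc m d = m := by rw [hd_def]; exact T.anc_depth m
    have hanc2 : T'.anc m d' = m := by rw [hd'_def]; exact T'.anc_depth m
    have e1 : n ∈ T.desc m ↔ T.Hsum r m ≤ g n := by
      have h := T.desc_iff hr (T.anc_mem m d) n
      rw [hanc1] at h
      exact h
    have e2 : n ∈ T'.desc m ↔ T'.Hsum r' m ≤ g' n := by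
      have h := T'.desc_iff hr' (T'.anc_mem m d') n
      rw [hanc2] at h
      exact h
    have hvd : T.Hsum r m = T'.Hsum r' m := by
      have h := hveq d le_rfl
      simp only [hv_def, hv'_def] at h
      rw [hanc1, hd, hanc2] at h
      exact h
    rw [e1, e2, hvd, hgg]
  · have hkd2 : k < d := lt_of_le_of_ne hk hkd
    rw [if_neg hkd, if_neg hkd]
    ext n
    simp only [Set.mem_diff]
    rw [T.desc_iff hr (T.anc_mem m k) n, T.desc_iff hr (T.anc_mem m (k+1)) n,
      T'.desc_iff hr' (T'.anc_mem m k) n, T'.desc_iff hr' (T'.anc_mem m (k+1)) n]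
    have hv1 : T.Hsum r (T.anc m k) = T'.Hsum r' (T'.anc m k) := hveq k hk
    have hv2 : T.Hsum r (T.anc m (k+1)) = T'.Hsum r' (T'.anc m (k+1)) := hveq (k+1) (by omega)
    rw [hv1, hv2, hcol n]
end
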